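/- There exists a positional winning agent strategy σ_a ∈ 𝔖_a on the knowledge-based game arena G such that reg_G(σ_a) ≤ reg_G(σ_a') for every winning agent strategy σ_a' ∈ 𝔖_a; that is, positional strategies suffice to minimize the regret of the agent-player. -/

import Mathlib

namespace RegretLTL

/-- A deterministic finite automaton over alphabet `2^AP`. -/
structure DFAut (Q AP : Type) where
  q0 : Q
  f : Q → Finset AP → Q
  QF : Set Q

/-- A partially-known weighted transition system. -/
structure PKWTS (X AP : Type) where
  x0 : X
  Δ : X → Finset (Finset X)
  Δ_nonempty : ∀ x, (Δ x).Nonempty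
  w : X → X → ℝ
  w_nonneg : ∀ x y, 0 ≤ w x y
  L : X → Finset AP
  x0_known : (Δ x0).card = 1

variable {X Q AP : Type} [DecidableEq X] [Fintype X] [Fintype Q] [Fintype AP]
  [Inhabited X] [Inhabited Q]

/-- The pattern recorded for `x` in a knowledge-set (junk value `∅` if absent). -/
def lookupO (K : List (X × Finset X)) (x : X) : Finset X :=
  ((K.find? (fun k => decide (k.1 = x))).map Prod.snd).getD ∅

/-- `x` has been explored in the knowledge-set `K`, i.e. `x ∈ X(K)`. -/
def Explored (K : List (X × Finset X)) (x : X) : Prop := ∃ o, (x, o) ∈ K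

/-- Knowledge-set update. -/
def kupdate (K : List (X × Finset X)) (κ : X × Finset X) : List (X × Finset X) :=
  if K.any (fun k => decide (k.1 = κ.1)) then K else K ++ [κ]

variable (M : PKWTS X AP) (D : DFAut Q AP) (K0 : List (X × Finset X))

/-- `K0` is the initial knowledge-set: it lists (in some fixed order) each known
state together with its unique successor pattern. -/
def IsInitK : Prop :=
  (K0.map Prod.fst).Nodup ∧ (∀ p ∈ K0, M.Δ p.1 = {p.2}) ∧
    ∀ x : X, (M.Δ x).card = 1 → ∃ o, (x, o) ∈ K0

/-- A compatible environment `T ∈ 𝕋`, given by its transition function. -/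
def CompatEnv := { δ : X → Finset X // ∀ x, δ x ∈ M.Δ x }

/-- A finite path of the environment with transition function `δ`, starting at `x0`. -/
def IsEnvPath (δ : X → Finset X) (ρ : List X) : Prop :=
  ρ ≠ [] ∧ ρ.head? = some M.x0 ∧ ρ.Chain' (fun a b => b ∈ δ a)

/-- Cost of a finite path. -/
def costP (ρ : List X) : ℝ := (List.zipWith M.w ρ ρ.tail).sum

/-- Run of the DFA on the labels of a sequence of states. -/
def frun (q : Q) (xs : List X) : Q := xs.foldl (fun q x => D.f q (M.L x)) q

/-- The finite path `ρ = x0 x1 ⋯ xn` accomplishes the task: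
`f(q0, L(x0)⋯L(x_{n-1})) ∈ QF`. -/
def Accomplishes (ρ : List X) : Prop :=
  ρ ≠ [] ∧ frun M D D.q0 ρ.dropLast ∈ D.QF

/-- A history of the PK-WTS. -/
def IsHistory (h : List (X × Finset X)) : Prop :=
  h ≠ [] ∧ (h.map Prod.fst).head? = some M.x0 ∧
  (∀ p ∈ h, p.2 ∈ M.Δ p.1) ∧
  h.Chain' (fun p p' => p'.1 ∈ p.2) ∧
  ∀ p ∈ h, ∀ p' ∈ h, p.1 = p'.1 → p.2 = p'.2

/-- Validity of a strategy for the PK-WTS: it moves to a successor in the last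
observed pattern, or stops. -/
def XiValid (ξ : List (X × Finset X) → Option X) : Prop :=
  ∀ h p x, IsHistory M h → h.getLast? = some p → ξ h = some x → x ∈ p.2

/-- The history induced from a path in a fixed environment. -/
def histOf (δ : X → Finset X) (ρ : List X) : List (X × Finset X) :=
  ρ.map (fun x => (x, δ x))

/-- `ρ` is the outcome path `ρ^T_ξ` of strategy `ξ` in environment `δ`. -/
def IsOutcomePath (ξ : List (X × Finset X) → Option X) (δ : X → Finset X)
    (ρ : List X) : Prop :=
  IsEnvPath M δ ρ ∧
  (∀ i (h : i + 1 < ρ.length),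
    ξ (histOf δ (ρ.take (i+1))) = some (ρ[i+1]'h)) ∧
  ξ (histOf δ ρ) = none

open Classical in
/-- The outcome path `ρ^T_ξ` (junk `[]` if it does not exist). -/
noncomputable def outcomePath (ξ : List (X × Finset X) → Option X)
    (T : CompatEnv M) : List X :=
  if h : ∃ ρ, IsOutcomePath M ξ T.1 ρ then h.choose else []

/-- `Stra_A(𝕋)`: strategies whose outcome path exists and accomplishes the task in
every compatible environment. -/
def StraA : Set (List (X × Finset X) → Option X) :=
  { ξ | XiValid M ξ ∧
      ∀ T : CompatEnv M, ∃ ρ, IsOutcomePath M ξ T.1 ρ ∧ Accomplishes M D ρ }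

/-- The regret of a strategy `ξ` in the partially-known environment `𝕋`. -/
noncomputable def regT (ξ : List (X × Finset X) → Option X) : ℝ :=
  sSup { r | ∃ T : CompatEnv M,
    costP M (outcomePath M ξ T) -
      sInf { c | ∃ ξ' ∈ StraA M D, costP M (outcomePath M ξ' T) = c } = r }

/-- Vertices of the knowledge-based game arena. -/
inductive Vtx (X Q : Type) where
  | ag (x : X) (q : Q) (K : List (X × Finset X))
  | env (x : X) (q : Q) (K : List (X × Finset X)) (xh : X)

instance : Inhabited (Vtx X Q) := ⟨.ag default default []⟩

def IsAgV : Vtx X Q → Prop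
  | .ag _ _ _ => True
  | _ => False

def IsEnvV : Vtx X Q → Prop
  | .env _ _ _ _ => True
  | _ => False

/-- Knowledge-set component of a vertex. -/
def Kof : Vtx X Q → List (X × Finset X)
  | .ag _ _ K => K
  | .env _ _ K _ => K

/-- The fourth (target-state) component of an environment vertex. -/
def tgtOf : Vtx X Q → Option X
  | .env _ _ _ xh => some xh
  | _ => none

/-- Edges of the knowledge-based game arena. -/
def Edge : Vtx X Q → Vtx X Q → Prop
  | .ag x q K, .env x' q' K' xh =>
      x' = x ∧ q' = q ∧ K' = K ∧ Explored K x ∧ xh ∈ lookupO K x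
  | .env xe qe Ke xh, .ag xa qa Ka =>
      xa = xh ∧ qa = D.f qe (M.L xe) ∧ ∃ o ∈ M.Δ xa, Ka = kupdate Ke (xa, o)
  | _, _ => False

/-- Initial vertex of the arena. -/
def v0 : Vtx X Q := .ag M.x0 D.q0 K0

/-- Weight function of the arena. -/
def wG : Vtx X Q → Vtx X Q → ℝ
  | .env xe _ _ _, .ag xa _ _ => M.w xe xa
  | _, _ => 0

/-- A play: a finite directed path in the arena starting at `v0`. -/
def IsPlay (π : List (Vtx X Q)) : Prop :=
  π.head? = some (v0 M D K0) ∧ π.Chain' (Edge M D)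

/-- Cost of a play. -/
def costG (π : List (Vtx X Q)) : ℝ := (List.zipWith (wG M) π π.tail).sum

/-- Accepting (final) vertices `V_F`. -/
def InVF : Vtx X Q → Prop
  | Vtx.ag _ q _ => q ∈ D.QF
  | _ => False

/-- Validity of an agent strategy: along plays ending at an agent vertex, it
either stops or moves along an edge of the arena. -/
def AValid (σa : List (Vtx X Q) → Option (Vtx X Q)) : Prop :=
  ∀ π u v, IsPlay M D K0 π → π.getLast? = some u → IsAgV u → σa π = some v →
    Edge M D u v

/-- Validity of a (positional) environment strategy: it moves along edges of the
arena, and it reveals the same successor pattern whenever the same unexplored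
state is entered. This defines membership in `𝔖_e`. -/
def EValid (σe : Vtx X Q → Vtx X Q) : Prop :=
  (∀ v, IsEnvV v → Edge M D v (σe v)) ∧
  (∀ (x : X) (q : Q) (K : List (X × Finset X)) (x' : X) (q' : Q)
      (K' : List (X × Finset X)) (xh : X),
    ¬ Explored K xh → ¬ Explored K' xh →
    lookupO (Kof (σe (.env x q K xh))) xh = lookupO (Kof (σe (.env x' q' K' xh))) xh)

/-- The set `𝔖_e` of environment strategies. -/
def SE : Set (Vtx X Q → Vtx X Q) := { σe | EValid M D σe }

/-- `π` is the outcome play `π_{σa,σe}`. -/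
def IsOutcome (σa : List (Vtx X Q) → Option (Vtx X Q)) (σe : Vtx X Q → Vtx X Q)
    (π : List (Vtx X Q)) : Prop :=
  IsPlay M D K0 π ∧
  (∀ i (h : i + 1 < π.length),
    (IsAgV (π[i]'(Nat.lt_of_succ_lt h)) → σa (π.take (i+1)) = some (π[i+1]'h)) ∧
    (IsEnvV (π[i]'(Nat.lt_of_succ_lt h)) → σe (π[i]'(Nat.lt_of_succ_lt h)) = π[i+1]'h)) ∧
  IsAgV π.getLast! ∧ σa π = none

open Classical in
/-- The outcome play `π_{σa,σe}` (junk `[]` if it does not exist). -/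
noncomputable def outcome (σa : List (Vtx X Q) → Option (Vtx X Q))
    (σe : Vtx X Q → Vtx X Q) : List (Vtx X Q) :=
  if h : ∃ π, IsOutcome M D K0 σa σe π then h.choose else []

/-- The set `𝔖_a` of winning agent strategies. -/
def SA : Set (List (Vtx X Q) → Option (Vtx X Q)) :=
  { σa | AValid M D K0 σa ∧
      ∀ σe ∈ SE M D, ∃ π, IsOutcome M D K0 σa σe π ∧ InVF D π.getLast! }

/-- `min_{σa' ∈ 𝔖_a} cost_G(π_{σa',σe})`. -/
noncomputable def bestCost (σe : Vtx X Q → Vtx X Q) : ℝ :=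
  sInf { c | ∃ σa ∈ SA M D K0, costG M (outcome M D K0 σa σe) = c }

/-- The regret `reg_G^{σe}(σa)` of `σa` against `σe`. -/
noncomputable def regAgainst (σa : List (Vtx X Q) → Option (Vtx X Q))
    (σe : Vtx X Q → Vtx X Q) : ℝ :=
  costG M (outcome M D K0 σa σe) - bestCost M D K0 σe

/-- The regret `reg_G(σa)`. -/
noncomputable def regG (σa : List (Vtx X Q) → Option (Vtx X Q)) : ℝ :=
  sSup { r | ∃ σe ∈ SE M D, regAgainst M D K0 σa σe = r }

/-- Positional agent strategies. -/
def PositionalA (σa : List (Vtx X Q) → Option (Vtx X Q)) : Prop :=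
  ∀ π π' : List (Vtx X Q), π.getLast? = π'.getLast? → σa π = σa π'

/-- `T ∈ 𝕋_K`. -/
def InTK (K : List (X × Finset X)) (T : CompatEnv M) : Prop :=
  ∀ p ∈ K, T.1 p.1 = p.2

/-- Best response `br(K)`. -/
noncomputable def br (K : List (X × Finset X)) : ℝ :=
  sInf { c | ∃ T : CompatEnv M, InTK M K T ∧
    ∃ ρ, IsEnvPath M T.1 ρ ∧ Accomplishes M D ρ ∧ costP M ρ = c }

/-- Minimum cost of a play from `v0` to `v`. -/
noncomputable def SPcost (v : Vtx X Q) : ℝ :=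
  sInf { c | ∃ π, IsPlay M D K0 π ∧ π.getLast? = some v ∧ costG M π = c }

/-- The edge `(u,v)` occurs on the play `π`. -/
def EdgeOn (u v : Vtx X Q) (π : List (Vtx X Q)) : Prop := (u, v) ∈ π.zip π.tail

/-- `(u,v) ∈ E_SP`: `(u,v)` lies on a minimum-cost play from `v0` to `V_F`. -/
def inESP (u v : Vtx X Q) : Prop :=
  ∃ π vf, IsPlay M D K0 π ∧ π.getLast? = some vf ∧ InVF D vf ∧
    costG M π = SPcost M D K0 vf ∧ EdgeOn u v π

open Classical in
/-- The modified weight function `μ`, with values in `EReal`. -/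
noncomputable def mu (u v : Vtx X Q) : EReal :=
  if IsEnvV u ∧ IsAgV v then
    (if inESP M D K0 u v then
      (if InVF D v then (((SPcost M D K0 v - br M D (Kof v) : ℝ)) : EReal) else 0)
     else ⊤)
  else 0

/-- Cost of a play with respect to `μ`. -/
noncomputable def costMu (π : List (Vtx X Q)) : EReal :=
  (List.zipWith (mu M D K0) π π.tail).sum

open Classical in
/-- `Val^μ(σa)`. -/
noncomputable def Valmu (σa : List (Vtx X Q) → Option (Vtx X Q)) : EReal :=
  if AValid M D K0 σa ∧
     (∀ σe ∈ SE M D, ∃ π, IsOutcome M D K0 σa σe π ∧ InVF D π.getLast!)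
  then sSup { c : EReal | ∃ σe ∈ SE M D, costMu M D K0 (outcome M D K0 σa σe) = c }
  else ⊤

/-- The environment strategy `σ_e^T` induced by a compatible environment `T`. -/
def envOf (T : CompatEnv M) : Vtx X Q → Vtx X Q
  | .env x q K xh => .ag xh (D.f q (M.L x)) (kupdate K (xh, T.1 xh))
  | v => v

/-- Best responses are achievable: for every compatible `T`, the best cost against
`σ_e^T` in the arena equals the minimum cost of a path of `T` accomplishing the task. -/
def BRAchievable : Prop :=
  ∀ T : CompatEnv M,
    bestCost M D K0 (envOf M D T) =
      sInf { c | ∃ ρ, IsEnvPath M T.1 ρ ∧ Accomplishes M D ρ ∧ costP M ρ = c }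

/-- The sequence of `X`-components of the agent vertices of a play. -/
def agentStates (π : List (Vtx X Q)) : List X :=
  π.filterMap (fun v => match v with | .ag x _ _ => some x | _ => none)

/-- The history induced by a complete play. -/
def inducedHist (π : List (Vtx X Q)) : List (X × Finset X) :=
  π.filterMap (fun v => match v with | .ag x _ K => some (x, lookupO K x) | _ => none)

/-- A branching environment vertex: at least two outgoing edges. -/
def Branching (v : Vtx X Q) : Prop :=
  IsEnvV v ∧ ∃ u1 u2, u1 ≠ u2 ∧ Edge M D v u1 ∧ Edge M D v u2

open Classical in
/-- The sublist of branching environment vertices of a play, in order. -/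
noncomputable def branchList (π : List (Vtx X Q)) : List (Vtx X Q) :=
  π.filter (fun v => decide (Branching M D v))


section AuxDev
open Classical List

/-! ### Basic vertex and edge lemmas -/

lemma vtx_ag_or_env (v : Vtx X Q) : IsAgV v ∨ IsEnvV v := by
  cases v <;> simp [IsAgV, IsEnvV]

lemma not_ag_env {v : Vtx X Q} (h1 : IsAgV v) (h2 : IsEnvV v) : False := by
  cases v <;> simp [IsAgV, IsEnvV] at *

lemma ag_shape {v : Vtx X Q} (h : IsAgV v) : ∃ x q K, v = Vtx.ag x q K := by
  cases v with
  | ag x q K => exact ⟨x, q, K, rfl⟩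
  | env x q K xh => simp [IsAgV] at h

lemma env_shape {v : Vtx X Q} (h : IsEnvV v) : ∃ x q K xh, v = Vtx.env x q K xh := by
  cases v with
  | ag x q K => simp [IsEnvV] at h
  | env x q K xh => exact ⟨x, q, K, xh, rfl⟩

lemma edge_ag_env {u v : Vtx X Q} (h : Edge M D u v) :
    (IsAgV u → IsEnvV v) ∧ (IsEnvV u → IsAgV v) := by
  cases u <;> cases v <;> simp [Edge, IsAgV, IsEnvV] at *

/-! ### kupdate / lookupO lemmas -/

lemma explored_any (K : List (X × Finset X)) (x : X) :
    (K.any fun k => decide (k.1 = x)) = true ↔ Explored K x := by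
  simp only [List.any_eq_true, decide_eq_true_eq, Explored]
  constructor
  · rintro ⟨k, hk, rfl⟩; exact ⟨k.2, hk⟩
  · rintro ⟨o, ho⟩; exact ⟨(x, o), ho, rfl⟩

lemma kupdate_explored {K : List (X × Finset X)} {κ : X × Finset X}
    (h : Explored K κ.1) : kupdate K κ = K := by
  unfold kupdate; rw [if_pos ((explored_any K κ.1).2 h)]

lemma kupdate_not_explored {K : List (X × Finset X)} {κ : X × Finset X}
    (h : ¬ Explored K κ.1) : kupdate K κ = K ++ [κ] := by
  unfold kupdate; rw [if_neg (fun hc => h ((explored_any K κ.1).1 hc))]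

lemma mem_kupdate {K : List (X × Finset X)} {κ p : X × Finset X} (h : p ∈ K) :
    p ∈ kupdate K κ := by
  unfold kupdate; split <;> simp [h]

lemma lookupO_append_not_explored {K : List (X × Finset X)} {x : X} {o : Finset X}
    (h : ¬ Explored K x) : lookupO (K ++ [(x, o)]) x = o := by
  unfold lookupO
  rw [List.find?_append]
  have h1 : K.find? (fun k => decide (k.1 = x)) = none := by
    rw [List.find?_eq_none]
    intro k hk hdec
    simp only [decide_eq_true_eq] at hdec
    exact h ⟨k.2, by rw [← hdec]; exact hk⟩
  simp [h1, List.find?]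

lemma kupdate_nodup {K : List (X × Finset X)} {κ : X × Finset X}
    (h : (K.map Prod.fst).Nodup) : (((kupdate K κ).map Prod.fst)).Nodup := by
  unfold kupdate; split
  · exact h
  · rename_i hc
    have : κ.1 ∉ K.map Prod.fst := by
      intro hmem
      obtain ⟨p, hp, hp1⟩ := List.mem_map.1 hmem
      exact hc ((explored_any K κ.1).2 ⟨p.2, by rw [← hp1]; exact hp⟩)
    simp [List.nodup_append, h, this]
    intro a x hax hax1; exact this (List.mem_map.2 ⟨(a, x), hax, hax1⟩)

/-! ### getElem helpers -/

lemma head?_getElem {α : Type*} {l : List α} {a : α} (h : l.head? = some a)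
    (h0 : 0 < l.length) : l[0] = a := by
  cases l with
  | nil => simp at h
  | cons b t => simp_all

lemma head?_length_pos {α : Type*} {l : List α} {a : α} (h : l.head? = some a) :
    0 < l.length := by
  cases l with
  | nil => simp at h
  | cons b t => simp

lemma getLast?_of_getElem_last {α : Type*} {l : List α} (h0 : 0 < l.length) :
    l.getLast? = some (l[l.length - 1]'(by omega)) := by
  rw [List.getLast?_eq_getElem?]
  exact List.getElem?_eq_getElem (by omega)

lemma getLast?_take_succ {α : Type*} {l : List α} {i : ℕ} (h : i < l.length) :
    (l.take (i+1)).getLast? = some (l[i]'h) := by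
  rw [List.getLast?_take]
  simp [List.getElem?_eq_getElem h]

lemma chain'_getElem {α : Type*} {R : α → α → Prop} {l : List α} (h : l.Chain' R)
    {i : ℕ} (hi : i + 1 < l.length) :
    R (l[i]'(by omega)) (l[i+1]'hi) := by
  have := List.isChain_iff_getElem.1 h i (by omega)
  simpa [List.get_eq_getElem] using this

end AuxDev

set_option linter.unusedSectionVars false in
lemma kof_mono_step {u v : Vtx X Q} (h : Edge M D u v) {p : X × Finset X}
    (hp : p ∈ Kof u) : p ∈ Kof v := by
  cases u with
  | ag x q K =>
    cases v with
    | ag x' q' K' => simp [Edge] at h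
    | env x' q' K' xh =>
      obtain ⟨-, -, rfl, -⟩ := h
      exact hp
  | env xe qe Ke xh =>
    cases v with
    | ag xa qa Ka =>
      obtain ⟨-, -, o, -, rfl⟩ := h
      exact mem_kupdate hp
    | env x' q' K' xh' => simp [Edge] at h

set_option linter.unusedSectionVars false in
lemma kof_mono {π : List (Vtx X Q)} (h : π.Chain' (Edge M D)) {i j : ℕ}
    (hij : i ≤ j) (hj : j < π.length) {p : X × Finset X}
    (hp : p ∈ Kof (π[i]'(lt_of_le_of_lt hij hj))) : p ∈ Kof (π[j]'hj) := by
  induction j with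
  | zero =>
    interval_cases i
    exact hp
  | succ n ih =>
    rcases Nat.lt_or_ge i (n+1) with hlt | hge
    · have hn : n < π.length := by omega
      have := ih (by omega) hn (by exact hp)
      exact kof_mono_step M D (chain'_getElem h hj) this
    · have : i = n + 1 := by omega
      subst this
      exact hp

/-- A play that follows `σa` at agent vertices and `σe` at environment vertices. -/
def Follows (σa : List (Vtx X Q) → Option (Vtx X Q)) (σe : Vtx X Q → Vtx X Q)
    (π : List (Vtx X Q)) : Prop :=
  π.head? = some (v0 M D K0) ∧
  ∀ i (h : i + 1 < π.length),
    (IsAgV (π[i]'(Nat.lt_of_succ_lt h)) → σa (π.take (i+1)) = some (π[i+1]'h)) ∧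
    (IsEnvV (π[i]'(Nat.lt_of_succ_lt h)) → σe (π[i]'(Nat.lt_of_succ_lt h)) = π[i+1]'h)

set_option linter.unusedSectionVars false in
lemma follows_of_outcome {σa : List (Vtx X Q) → Option (Vtx X Q)}
    {σe : Vtx X Q → Vtx X Q} {π : List (Vtx X Q)}
    (h : IsOutcome M D K0 σa σe π) : Follows M D K0 σa σe π :=
  ⟨h.1.1, h.2.1⟩

set_option linter.unusedSectionVars false in
lemma follows_agree {σa : List (Vtx X Q) → Option (Vtx X Q)}
    {σe : Vtx X Q → Vtx X Q} {π1 π2 : List (Vtx X Q)}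
    (h1 : Follows M D K0 σa σe π1) (h2 : Follows M D K0 σa σe π2) :
    ∀ i (hi1 : i < π1.length) (hi2 : i < π2.length), π1[i] = π2[i] := by
  intro i
  induction i using Nat.strong_induction_on with
  | _ i ih =>
    intro hi1 hi2
    match i with
    | 0 => rw [head?_getElem h1.1 hi1, head?_getElem h2.1 hi2]
    | (j+1) =>
      have hprev : π1[j]'(by omega) = π2[j]'(by omega) := ih j (by omega) (by omega) (by omega)
      have htake : π1.take (j+1) = π2.take (j+1) := by
        apply List.ext_getElem
        · simp; omega
        · intro k hk1 hk2
          simp only [List.getElem_take]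
          have hk : k < j + 1 := by simp [List.length_take] at hk1; omega
          exact ih k hk (by omega) (by omega)
      rcases vtx_ag_or_env (π1[j]'(by omega)) with hag | henv
      · have e1 := (h1.2 j hi1).1 hag
        have e2 := (h2.2 j hi2).1 (hprev ▸ hag)
        rw [htake] at e1
        rw [e1] at e2
        exact Option.some_injective _ e2
      · have e1 := (h1.2 j hi1).2 henv
        have e2 := (h2.2 j hi2).2 (hprev ▸ henv)
        rw [← e1, ← e2, hprev]

set_option linter.unusedSectionVars false in
lemma follows_prefix {σa : List (Vtx X Q) → Option (Vtx X Q)}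
    {σe : Vtx X Q → Vtx X Q} {p π : List (Vtx X Q)}
    (h1 : Follows M D K0 σa σe p) (h2 : IsOutcome M D K0 σa σe π) :
    p.length ≤ π.length ∧ p = π.take p.length := by
  have hne : 0 < π.length := head?_length_pos h2.1.1
  have hlen : p.length ≤ π.length := by
    by_contra hlt
    push_neg at hlt
    -- p is longer than π : contradiction with σa π = none
    have hagree := follows_agree M D K0 h1 (follows_of_outcome M D K0 h2)
    have hlast : π.getLast! = π[π.length - 1]'(by omega) :=
      List.getLast!_of_getLast? (getLast?_of_getElem_last hne)
    have hagv : IsAgV (p[π.length - 1]'(by omega)) := by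
      rw [hagree (π.length - 1) (by omega) (by omega)]
      rw [← hlast]; exact h2.2.2.1
    have hcl := (h1.2 (π.length - 1) (by omega)).1 hagv
    have htk : p.take (π.length - 1 + 1) = π := by
      apply List.ext_getElem
      · simp; omega
      · intro k hk1 hk2
        simp only [List.getElem_take]
        exact hagree k (by omega) (by omega)
    rw [htk, h2.2.2.2] at hcl
    exact nomatch hcl
  refine ⟨hlen, ?_⟩
  apply List.ext_getElem
  · simp; omega
  · intro k hk1 hk2
    simp only [List.getElem_take]
    exact follows_agree M D K0 h1 (follows_of_outcome M D K0 h2) k hk1 (by omega)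

set_option linter.unusedSectionVars false in
lemma isOutcome_unique {σa : List (Vtx X Q) → Option (Vtx X Q)}
    {σe : Vtx X Q → Vtx X Q} {π1 π2 : List (Vtx X Q)}
    (h1 : IsOutcome M D K0 σa σe π1) (h2 : IsOutcome M D K0 σa σe π2) : π1 = π2 := by
  have a1 := follows_prefix M D K0 (follows_of_outcome M D K0 h1) h2
  have a2 := follows_prefix M D K0 (follows_of_outcome M D K0 h2) h1
  have : π1.length = π2.length := le_antisymm a1.1 a2.1
  rw [a1.2, this, List.take_length]

set_option linter.unusedSectionVars false in
lemma isOutcome_iff_envAgree {σa : List (Vtx X Q) → Option (Vtx X Q)}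
    {σe σe' : Vtx X Q → Vtx X Q} (hag : ∀ v, IsEnvV v → σe v = σe' v)
    (π : List (Vtx X Q)) :
    IsOutcome M D K0 σa σe π ↔ IsOutcome M D K0 σa σe' π := by
  constructor <;>
    (rintro ⟨hp, hcl, hl, hn⟩
     refine ⟨hp, fun i h => ⟨(hcl i h).1, fun he => ?_⟩, hl, hn⟩)
  · rw [← hag _ he]; exact (hcl i h).2 he
  · rw [hag _ he]; exact (hcl i h).2 he

set_option linter.unusedSectionVars false in
lemma outcome_congr {σa : List (Vtx X Q) → Option (Vtx X Q)}
    {σe σe' : Vtx X Q → Vtx X Q} (hag : ∀ v, IsEnvV v → σe v = σe' v) :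
    outcome M D K0 σa σe = outcome M D K0 σa σe' := by
  have hpred : IsOutcome M D K0 σa σe = IsOutcome M D K0 σa σe' :=
    funext fun π => propext (isOutcome_iff_envAgree M D K0 hag π)
  unfold outcome
  rw [hpred]

set_option linter.unusedSectionVars false in
lemma outcome_spec {σa : List (Vtx X Q) → Option (Vtx X Q)}
    {σe : Vtx X Q → Vtx X Q} (h : ∃ π, IsOutcome M D K0 σa σe π) :
    IsOutcome M D K0 σa σe (outcome M D K0 σa σe) := by
  unfold outcome
  rw [dif_pos h]
  exact h.choose_spec

/-- A play following `σa` and the environment `T` (no termination requirement). -/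
def SAPlay (σa : List (Vtx X Q) → Option (Vtx X Q)) (T : CompatEnv M)
    (π : List (Vtx X Q)) : Prop :=
  π.Chain' (Edge M D) ∧ Follows M D K0 σa (envOf M D T) π

set_option linter.unusedSectionVars false in
lemma sap_of_outcome {σa : List (Vtx X Q) → Option (Vtx X Q)} {T : CompatEnv M}
    {π : List (Vtx X Q)} (h : IsOutcome M D K0 σa (envOf M D T) π) :
    SAPlay M D K0 σa T π := ⟨h.1.2, follows_of_outcome M D K0 h⟩

set_option linter.unusedSectionVars false in
lemma sap_take {σa : List (Vtx X Q) → Option (Vtx X Q)} {T : CompatEnv M}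
    {π : List (Vtx X Q)} (h : SAPlay M D K0 σa T π) {k : ℕ} (hk : k < π.length) :
    SAPlay M D K0 σa T (π.take (k+1)) := by
  obtain ⟨hc, hh, hcl⟩ := h
  refine ⟨hc.take _, ?_, ?_⟩
  · rw [← hh]
    cases π with
    | nil => simp at hk
    | cons a t => simp
  · intro i hi
    have hlen : (π.take (k+1)).length = k + 1 := by simp; omega
    rw [hlen] at hi
    have hi' : i + 1 < π.length := by omega
    have g1 : (π.take (k+1))[i]'(by omega) = π[i]'(by omega) := List.getElem_take
    have g2 : (π.take (k+1))[i+1]'(by rw [hlen]; omega) = π[i+1]'hi' := List.getElem_take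
    have g3 : (π.take (k+1)).take (i+1) = π.take (i+1) := by
      rw [List.take_take]; congr 1; omega
    constructor
    · intro hag
      rw [g3]
      have := (hcl i hi').1 (by rwa [g1] at hag)
      rw [this]
      rw [g2]
    · intro henv
      rw [g1] at henv ⊢
      rw [g2]
      exact (hcl i hi').2 henv

set_option linter.unusedSectionVars false in
lemma sap_getElem_zero {σa : List (Vtx X Q) → Option (Vtx X Q)} {T : CompatEnv M}
    {π : List (Vtx X Q)} (h : SAPlay M D K0 σa T π) (h0 : 0 < π.length) :
    π[0] = v0 M D K0 := head?_getElem h.2.1 h0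

/-- All knowledge recorded along a `T`-play is consistent with `T`. -/
lemma kof_consistent (hinit : IsInitK M K0) {σa : List (Vtx X Q) → Option (Vtx X Q)}
    {T : CompatEnv M} {π : List (Vtx X Q)} (h : SAPlay M D K0 σa T π) :
    ∀ i (hi : i < π.length), ∀ z o, (z, o) ∈ Kof (π[i]'hi) → T.1 z = o := by
  intro i
  induction i with
  | zero =>
    intro hi z o hmem
    rw [sap_getElem_zero M D K0 h hi] at hmem
    have hK0 : (z, o) ∈ K0 := hmem
    have := hinit.2.1 _ hK0
    have hT := T.2 z
    rw [this] at hT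
    simpa using hT
  | succ n ih =>
    intro hi z o hmem
    have hn : n < π.length := by omega
    rcases vtx_ag_or_env (π[n]'hn) with hag | henv
    · -- agent step : Kof unchanged (edge gives K' = K)
      have hedge := chain'_getElem h.1 hi
      obtain ⟨x, q, K, hshape⟩ := ag_shape hag
      cases hv : π[n+1]'hi with
      | ag x' q' K' => rw [hshape, hv] at hedge; simp [Edge] at hedge
      | env x' q' K' xh =>
        rw [hshape, hv] at hedge
        obtain ⟨-, -, rfl, -⟩ := hedge
        apply ih hn z o
        rw [hv] at hmem
        rw [hshape]
        exact hmem
    · have hstep := (h.2.2 n hi).2 henv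
      obtain ⟨xe, qe, Ke, xh, hshape⟩ := env_shape henv
      rw [hshape] at hstep
      rw [← hstep] at hmem
      simp only [envOf, Kof] at hmem
      by_cases hex : Explored Ke xh
      · rw [kupdate_explored hex] at hmem
        exact ih hn z o (by rw [hshape]; exact hmem)
      · rw [kupdate_not_explored hex] at hmem
        rcases List.mem_append.1 hmem with hKe | hnew
        · exact ih hn z o (by rw [hshape]; exact hKe)
        · simp at hnew
          rw [hnew.1, hnew.2]
    -- done

set_option linter.unusedSectionVars false in
lemma sap_change_env {σa : List (Vtx X Q) → Option (Vtx X Q)} {T1 T2 : CompatEnv M}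
    {π : List (Vtx X Q)} {v : Vtx X Q} (h : SAPlay M D K0 σa T1 π)
    (hv : π.getLast? = some v)
    (hcons : ∀ z o, (z, o) ∈ Kof v → T2.1 z = o) : SAPlay M D K0 σa T2 π := by
  have hne : 0 < π.length := head?_length_pos h.2.1
  have hvlast : v = π[π.length - 1]'(by omega) := by
    rw [getLast?_of_getElem_last hne] at hv
    exact (Option.some_injective _ hv).symm
  refine ⟨h.1, h.2.1, fun i hi => ⟨(h.2.2 i hi).1, fun he => ?_⟩⟩
  have hstep := (h.2.2 i hi).2 he
  obtain ⟨xe, qe, Ke, xh, hshape⟩ := env_shape he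
  rw [hshape] at hstep ⊢
  rw [← hstep]
  simp only [envOf]
  by_cases hex : Explored Ke xh
  · rw [kupdate_explored (κ := (xh, T1.1 xh)) hex, kupdate_explored (κ := (xh, T2.1 xh)) hex]
  · rw [kupdate_not_explored (κ := (xh, T1.1 xh)) hex,
        kupdate_not_explored (κ := (xh, T2.1 xh)) hex]
    have hmem : (xh, T1.1 xh) ∈ Kof (π[i+1]'hi) := by
      rw [← hstep]
      simp only [envOf, Kof]
      rw [kupdate_not_explored hex]
      simp
    have hmemlast : (xh, T1.1 xh) ∈ Kof v := by
      rw [hvlast]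
      exact kof_mono M D h.1 (by omega) (by omega) hmem
    rw [hcons _ _ hmemlast]

set_option linter.unusedSectionVars false in
lemma envOf_SE (T : CompatEnv M) : envOf M D T ∈ SE M D := by
  constructor
  · intro v hv
    obtain ⟨x, q, K, xh, rfl⟩ := env_shape hv
    show Edge M D _ (Vtx.ag xh (D.f q (M.L x)) (kupdate K (xh, T.1 xh)))
    exact ⟨rfl, rfl, T.1 xh, T.2 xh, rfl⟩
  · intro x q K x' q' K' xh h1 h2
    show lookupO (Kof (Vtx.ag xh (D.f q (M.L x)) (kupdate K (xh, T.1 xh)))) xh =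
      lookupO (Kof (Vtx.ag xh (D.f q' (M.L x')) (kupdate K' (xh, T.1 xh)))) xh
    simp only [Kof]
    rw [kupdate_not_explored (κ := (xh, T.1 xh)) h1,
        kupdate_not_explored (κ := (xh, T.1 xh)) h2,
        lookupO_append_not_explored h1, lookupO_append_not_explored h2]

set_option linter.unusedSectionVars false in
lemma se_edge_shape {σe : Vtx X Q → Vtx X Q} (hσe : σe ∈ SE M D)
    (xe : X) (qe : Q) (Ke : List (X × Finset X)) (xh : X) :
    ∃ o ∈ M.Δ xh, σe (Vtx.env xe qe Ke xh) =
      Vtx.ag xh (D.f qe (M.L xe)) (kupdate Ke (xh, o)) := by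
  have hE := hσe.1 (Vtx.env xe qe Ke xh) trivial
  cases hu : σe (Vtx.env xe qe Ke xh) with
  | env a b c d => rw [hu] at hE; simp [Edge] at hE
  | ag xa qa Ka =>
    rw [hu] at hE
    obtain ⟨rfl, rfl, o, ho, rfl⟩ := hE
    exact ⟨o, ho, rfl⟩

set_option linter.unusedSectionVars false in
lemma envTof_mem {σe : Vtx X Q → Vtx X Q} (hσe : σe ∈ SE M D) (x : X) :
    lookupO (Kof (σe (Vtx.env x default [] x))) x ∈ M.Δ x := by
  obtain ⟨o, ho, heq⟩ := se_edge_shape M D hσe x default [] x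
  rw [heq]
  simp only [Kof]
  have hnx : ¬ Explored ([] : List (X × Finset X)) x := by
    rintro ⟨o', ho'⟩; simp at ho'
  rw [kupdate_not_explored (κ := (x, o)) hnx]
  rw [show ([] : List (X × Finset X)) ++ [(x, o)] = [] ++ [(x, o)] from rfl,
      lookupO_append_not_explored hnx]
  exact ho

/-- The compatible environment induced by an environment strategy in `𝔖ₑ`. -/
noncomputable def envTof {σe : Vtx X Q → Vtx X Q} (hσe : σe ∈ SE M D) : CompatEnv M :=
  ⟨fun x => lookupO (Kof (σe (Vtx.env x default [] x))) x, fun x => envTof_mem M D hσe x⟩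

set_option linter.unusedSectionVars false in
lemma envTof_agrees {σe : Vtx X Q → Vtx X Q} (hσe : σe ∈ SE M D) :
    ∀ v, IsEnvV v → σe v = envOf M D (envTof M D hσe) v := by
  intro v hv
  obtain ⟨xe, qe, Ke, xh, rfl⟩ := env_shape hv
  obtain ⟨o, ho, heq⟩ := se_edge_shape M D hσe xe qe Ke xh
  rw [heq]
  show Vtx.ag xh (D.f qe (M.L xe)) (kupdate Ke (xh, o)) =
    Vtx.ag xh (D.f qe (M.L xe)) (kupdate Ke (xh, (envTof M D hσe).1 xh))
  congr 1
  by_cases hex : Explored Ke xh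
  · rw [kupdate_explored (κ := (xh, o)) hex,
        kupdate_explored (κ := (xh, (envTof M D hσe).1 xh)) hex]
  · have hnx : ¬ Explored ([] : List (X × Finset X)) xh := by
      rintro ⟨o', ho'⟩; simp at ho'
    have hcons := hσe.2 xe qe Ke xh default [] xh hex hnx
    rw [heq] at hcons
    simp only [Kof] at hcons
    rw [kupdate_not_explored (κ := (xh, o)) hex, lookupO_append_not_explored hex] at hcons
    have : o = (envTof M D hσe).1 xh := hcons
    rw [kupdate_not_explored (κ := (xh, o)) hex,
        kupdate_not_explored (κ := (xh, (envTof M D hσe).1 xh)) hex, this]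

instance : Finite (CompatEnv M) := by unfold CompatEnv; exact Subtype.finite

noncomputable instance : Fintype (CompatEnv M) := Fintype.ofFinite _

instance : Nonempty (CompatEnv M) :=
  ⟨⟨fun x => (M.Δ_nonempty x).choose, fun x => (M.Δ_nonempty x).choose_spec⟩⟩

/-! ### Regret via compatible environments -/

set_option linter.unusedSectionVars false in
lemma bestCost_congr {σe σe' : Vtx X Q → Vtx X Q}
    (hag : ∀ v, IsEnvV v → σe v = σe' v) :
    bestCost M D K0 σe = bestCost M D K0 σe' := by
  unfold bestCost
  congr 1
  ext c
  constructor
  · rintro ⟨σa, hσa, rfl⟩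
    exact ⟨σa, hσa, by rw [outcome_congr M D K0 hag]⟩
  · rintro ⟨σa, hσa, rfl⟩
    exact ⟨σa, hσa, by rw [outcome_congr M D K0 (fun v hv => (hag v hv).symm)]⟩

set_option linter.unusedSectionVars false in
lemma regAgainst_envOf {σa : List (Vtx X Q) → Option (Vtx X Q)}
    {σe : Vtx X Q → Vtx X Q} (hσe : σe ∈ SE M D) :
    regAgainst M D K0 σa σe = regAgainst M D K0 σa (envOf M D (envTof M D hσe)) := by
  unfold regAgainst
  rw [outcome_congr M D K0 (envTof_agrees M D hσe),
      bestCost_congr M D K0 (envTof_agrees M D hσe)]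

set_option linter.unusedSectionVars false in
lemma regG_eq_sSup_range (σa : List (Vtx X Q) → Option (Vtx X Q)) :
    regG M D K0 σa =
      sSup (Set.range fun T : CompatEnv M => regAgainst M D K0 σa (envOf M D T)) := by
  unfold regG
  congr 1
  ext r
  constructor
  · rintro ⟨σe, hσe, rfl⟩
    exact ⟨envTof M D hσe, (regAgainst_envOf M D K0 hσe).symm⟩
  · rintro ⟨T, rfl⟩
    exact ⟨envOf M D T, envOf_SE M D T, rfl⟩

set_option linter.unusedSectionVars false in
lemma regAgainst_le_regG (σa : List (Vtx X Q) → Option (Vtx X Q)) (T : CompatEnv M) :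
    regAgainst M D K0 σa (envOf M D T) ≤ regG M D K0 σa := by
  rw [regG_eq_sSup_range]
  exact le_csSup (Set.finite_range _).bddAbove ⟨T, rfl⟩

set_option linter.unusedSectionVars false in
lemma regG_le {σa : List (Vtx X Q) → Option (Vtx X Q)} {b : ℝ}
    (h : ∀ T : CompatEnv M, regAgainst M D K0 σa (envOf M D T) ≤ b) :
    regG M D K0 σa ≤ b := by
  rw [regG_eq_sSup_range]
  exact csSup_le (Set.range_nonempty _) (by rintro r ⟨T, rfl⟩; exact h T)

set_option linter.unusedSectionVars false in
lemma regG_mono {σa σa' : List (Vtx X Q) → Option (Vtx X Q)}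
    (h : ∀ T : CompatEnv M, costG M (outcome M D K0 σa (envOf M D T)) ≤
      costG M (outcome M D K0 σa' (envOf M D T))) :
    regG M D K0 σa ≤ regG M D K0 σa' := by
  apply regG_le
  intro T
  calc regAgainst M D K0 σa (envOf M D T)
      ≤ regAgainst M D K0 σa' (envOf M D T) := by
        unfold regAgainst; exact sub_le_sub_right (h T) _
    _ ≤ regG M D K0 σa' := regAgainst_le_regG M D K0 σa' T

/-! ### costG lemmas -/

set_option linter.unusedSectionVars false in
lemma wG_nonneg (u v : Vtx X Q) : 0 ≤ wG M u v := by
  cases u <;> cases v <;> simp [wG] <;> exact M.w_nonneg _ _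

set_option linter.unusedSectionVars false in
lemma costG_eq_sum (l : List (Vtx X Q)) :
    ∀ n, l.length ≤ n + 1 →
      costG M l = ∑ i ∈ Finset.range n,
        (match l[i]?, l[i+1]? with
         | some a, some b => wG M a b
         | _, _ => 0) := by
  induction l with
  | nil =>
    intro n _
    rw [show costG M [] = 0 by simp [costG]]
    symm
    apply Finset.sum_eq_zero
    intro i _
    simp
  | cons a t ih =>
    intro n hn
    cases t with
    | nil =>
      rw [show costG M [a] = 0 by simp [costG]]
      symm
      apply Finset.sum_eq_zero
      intro i _
      match i with
      | 0 => simp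
      | (j+1) => simp
    | cons b t' =>
      match n with
      | 0 => simp at hn
      | (n'+1) =>
        have hcost : costG M (a :: b :: t') = wG M a b + costG M (b :: t') := by
          simp [costG]
        rw [hcost, ih n' (by simpa using hn), Finset.sum_range_succ', add_comm]
        congr 1

set_option linter.unusedSectionVars false in
lemma costG_nonneg (l : List (Vtx X Q)) : 0 ≤ costG M l := by
  rw [costG_eq_sum M l l.length (by omega)]
  apply Finset.sum_nonneg
  intro i _
  cases h1 : l[i]? <;> cases h2 : l[i+1]? <;> simp [wG_nonneg]

set_option linter.unusedSectionVars false in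
lemma costG_cons_cons (a b : Vtx X Q) (l : List (Vtx X Q)) :
    costG M (a :: b :: l) = wG M a b + costG M (b :: l) := by
  simp [costG]

set_option linter.unusedSectionVars false in
lemma costG_drop_succ {l : List (Vtx X Q)} {m : ℕ} (h : m + 1 < l.length) :
    costG M (l.drop m) = wG M (l[m]'(by omega)) (l[m+1]'h) + costG M (l.drop (m+1)) := by
  rw [List.drop_eq_getElem_cons (by omega : m < l.length),
      List.drop_eq_getElem_cons h]
  exact costG_cons_cons M _ _ _

set_option linter.unusedSectionVars false in
lemma costG_drop_mono (l : List (Vtx X Q)) {k m : ℕ} (hkm : k ≤ m) :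
    costG M (l.drop m) ≤ costG M (l.drop k) := by
  induction m with
  | zero => interval_cases k; exact le_refl _
  | succ n ih =>
    rcases Nat.lt_or_ge k (n+1) with hlt | hge
    · have step : costG M (l.drop (n+1)) ≤ costG M (l.drop n) := by
        by_cases hn : n + 1 < l.length
        · rw [costG_drop_succ M hn]
          have := wG_nonneg M (l[n]'(by omega)) (l[n+1]'hn)
          linarith [costG_nonneg M (l.drop (n+1))]
        · rw [List.drop_eq_nil_of_le (by omega : l.length ≤ n + 1)]
          simpa [costG] using costG_nonneg M (l.drop n)
      exact le_trans step (ih (by omega))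
    · have : k = n + 1 := by omega
      subst this; exact le_refl _

/-! ### The positionalization construction -/

/-- Outcome play of `σa` against the environment `T`. -/
noncomputable def outT (σa : List (Vtx X Q) → Option (Vtx X Q)) (T : CompatEnv M) :
    List (Vtx X Q) := outcome M D K0 σa (envOf M D T)

set_option linter.unusedSectionVars false in
lemma outT_spec {σa : List (Vtx X Q) → Option (Vtx X Q)} (hσa : σa ∈ SA M D K0)
    (T : CompatEnv M) : IsOutcome M D K0 σa (envOf M D T) (outT M D K0 σa T) := by
  obtain ⟨π, hπ, -⟩ := hσa.2 (envOf M D T) (envOf_SE M D T)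
  exact outcome_spec M D K0 ⟨π, hπ⟩

set_option linter.unusedSectionVars false in
lemma outT_lastVF {σa : List (Vtx X Q) → Option (Vtx X Q)} (hσa : σa ∈ SA M D K0)
    (T : CompatEnv M) : InVF D (outT M D K0 σa T).getLast! := by
  obtain ⟨π, hπ, hvf⟩ := hσa.2 (envOf M D T) (envOf_SE M D T)
  rw [show outT M D K0 σa T = π from
    isOutcome_unique M D K0 (outT_spec M D K0 hσa T) hπ]
  exact hvf

set_option linter.unusedSectionVars false in
lemma outT_pos {σa : List (Vtx X Q) → Option (Vtx X Q)} (hσa : σa ∈ SA M D K0)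
    (T : CompatEnv M) : 0 < (outT M D K0 σa T).length :=
  head?_length_pos (outT_spec M D K0 hσa T).1.1

set_option linter.unusedSectionVars false in
lemma cross (hinit : IsInitK M K0) {σa : List (Vtx X Q) → Option (Vtx X Q)}
    (hσa : σa ∈ SA M D K0) {v : Vtx X Q} {T T' : CompatEnv M} {k k' : ℕ}
    (hk : (outT M D K0 σa T)[k]? = some v) (hk' : (outT M D K0 σa T')[k']? = some v) :
    (outT M D K0 σa T').take (k'+1) = (outT M D K0 σa T).take (k'+1) ∧
      k' < (outT M D K0 σa T).length := by
  have hklt : k < (outT M D K0 σa T).length := (List.getElem?_eq_some_iff.1 hk).1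
  have hkv : (outT M D K0 σa T)[k]'hklt = v := by
    have := List.getElem?_eq_getElem hklt
    rw [hk] at this; exact (Option.some_injective _ this).symm
  have hk'lt : k' < (outT M D K0 σa T').length := (List.getElem?_eq_some_iff.1 hk').1
  have hk'v : (outT M D K0 σa T')[k']'hk'lt = v := by
    have := List.getElem?_eq_getElem hk'lt
    rw [hk'] at this; exact (Option.some_injective _ this).symm
  -- the prefix of π_{T'} up to k'
  have hsapT' : SAPlay M D K0 σa T' (outT M D K0 σa T') :=
    sap_of_outcome M D K0 (outT_spec M D K0 hσa T')
  have hp : SAPlay M D K0 σa T' ((outT M D K0 σa T').take (k'+1)) :=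
    sap_take M D K0 hsapT' hk'lt
  have hplast : ((outT M D K0 σa T').take (k'+1)).getLast? = some v := by
    rw [getLast?_take_succ hk'lt, hk'v]
  -- knowledge at v is T-consistent
  have hcons : ∀ z o, (z, o) ∈ Kof v → T.1 z = o := by
    intro z o hzo
    have := kof_consistent M D K0 hinit
      (sap_of_outcome M D K0 (outT_spec M D K0 hσa T)) k hklt z o (by rw [hkv]; exact hzo)
    exact this
  have hpT : SAPlay M D K0 σa T ((outT M D K0 σa T').take (k'+1)) :=
    sap_change_env M D K0 hp hplast hcons
  have hpre := follows_prefix M D K0 hpT.2 (outT_spec M D K0 hσa T)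
  have hlen : ((outT M D K0 σa T').take (k'+1)).length = k' + 1 := by simp; omega
  constructor
  · rw [hpre.2, hlen]
  · rw [hlen] at hpre; omega

/-- The set of (one plus) positions at which `v` occurs on some outcome play. -/
def Sv (σa : List (Vtx X Q) → Option (Vtx X Q)) (v : Vtx X Q) : Set ℕ :=
  {n | ∃ (T : CompatEnv M) (k : ℕ), (outT M D K0 σa T)[k]? = some v ∧ n = k + 1}

/-- One plus the last position at which `v` occurs on an outcome play. -/
noncomputable def nv (σa : List (Vtx X Q) → Option (Vtx X Q)) (v : Vtx X Q) : ℕ :=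
  sSup (Sv M D K0 σa v)

open Classical in
/-- The positional action at a vertex. -/
noncomputable def act (σa : List (Vtx X Q) → Option (Vtx X Q)) (v : Vtx X Q) :
    Option (Vtx X Q) :=
  if h : ∃ T : CompatEnv M, (outT M D K0 σa T)[nv M D K0 σa v - 1]? = some v then
    σa ((outT M D K0 σa h.choose).take (nv M D K0 σa v))
  else none

/-- The positional strategy induced by `σa`. -/
noncomputable def posOf (σa : List (Vtx X Q) → Option (Vtx X Q)) :
    List (Vtx X Q) → Option (Vtx X Q) :=
  fun π => match π.getLast? with
    | some u => act M D K0 σa u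
    | none => none

set_option linter.unusedSectionVars false in
lemma posOf_positional (σa : List (Vtx X Q) → Option (Vtx X Q)) :
    PositionalA (posOf M D K0 σa) := by
  intro π π' h
  simp only [posOf, h]

set_option linter.unusedSectionVars false in
lemma Sv_bddAbove (σa : List (Vtx X Q) → Option (Vtx X Q)) (v : Vtx X Q) :
    BddAbove (Sv M D K0 σa v) := by
  refine ⟨Finset.univ.sup (fun T : CompatEnv M => (outT M D K0 σa T).length), ?_⟩
  rintro n ⟨T, k, hk, rfl⟩
  have : k < (outT M D K0 σa T).length := (List.getElem?_eq_some_iff.1 hk).1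
  calc k + 1 ≤ (outT M D K0 σa T).length := this
    _ ≤ _ := Finset.le_sup (f := fun T : CompatEnv M => (outT M D K0 σa T).length)
      (Finset.mem_univ T)

set_option linter.unusedSectionVars false in
lemma nv_spec (hinit : IsInitK M K0) {σa : List (Vtx X Q) → Option (Vtx X Q)}
    (hσa : σa ∈ SA M D K0) {v : Vtx X Q} {T : CompatEnv M} {k : ℕ}
    (hk : (outT M D K0 σa T)[k]? = some v) :
    k + 1 ≤ nv M D K0 σa v ∧ nv M D K0 σa v ≤ (outT M D K0 σa T).length ∧
      (outT M D K0 σa T)[nv M D K0 σa v - 1]? = some v ∧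
      act M D K0 σa v = σa ((outT M D K0 σa T).take (nv M D K0 σa v)) := by
  have hne : (Sv M D K0 σa v).Nonempty := ⟨k + 1, T, k, hk, rfl⟩
  have hmem := Nat.sSup_mem hne (Sv_bddAbove M D K0 σa v)
  obtain ⟨Tm, km, hkm, hnveq⟩ := hmem
  have h1 : k + 1 ≤ nv M D K0 σa v := le_csSup (Sv_bddAbove M D K0 σa v) ⟨T, k, hk, rfl⟩
  have hcrossm := cross M D K0 hinit hσa hk hkm
  have hkmT : (outT M D K0 σa T)[km]? = some v := by
    have e1 : ((outT M D K0 σa Tm).take (km+1))[km]? = some v := by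
      rw [List.getElem?_take]; simp [hkm]
    rw [hcrossm.1, List.getElem?_take] at e1
    simpa using e1
  have hnv1 : nv M D K0 σa v - 1 = km := by
    show sSup (Sv M D K0 σa v) - 1 = km
    omega
  refine ⟨h1, ?_, ?_, ?_⟩
  · show sSup (Sv M D K0 σa v) ≤ _
    have : km < (outT M D K0 σa T).length := hcrossm.2
    omega
  · rw [hnv1]; exact hkmT
  · unfold act
    have hex : ∃ T0 : CompatEnv M,
        (outT M D K0 σa T0)[nv M D K0 σa v - 1]? = some v := ⟨T, by rw [hnv1]; exact hkmT⟩
    rw [dif_pos hex]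
    have hc := hex.choose_spec
    generalize hgen : hex.choose = Tc at hc ⊢
    rw [hnv1] at hc
    have hcross2 := (cross M D K0 hinit hσa hk hc).1
    have hnveq' : nv M D K0 σa v = km + 1 := hnveq
    rw [hnveq', hcross2]

set_option linter.unusedSectionVars false in
lemma act_none (hinit : IsInitK M K0) {σa : List (Vtx X Q) → Option (Vtx X Q)}
    (hσa : σa ∈ SA M D K0) {v : Vtx X Q} {T : CompatEnv M} {k : ℕ}
    (hk : (outT M D K0 σa T)[k]? = some v)
    (hnv : nv M D K0 σa v = (outT M D K0 σa T).length) : act M D K0 σa v = none := by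
  obtain ⟨-, -, -, hact⟩ := nv_spec M D K0 hinit hσa hk
  rw [hact, hnv, List.take_length]
  exact (outT_spec M D K0 hσa T).2.2.2

set_option linter.unusedSectionVars false in
lemma getElem_idx_congr {α : Type*} {l : List α} {i j : ℕ} (h : i = j) (hi : i < l.length) :
    l[i]'hi = l[j]'(h ▸ hi) := by subst h; rfl

set_option linter.unusedSectionVars false in
lemma act_some (hinit : IsInitK M K0) {σa : List (Vtx X Q) → Option (Vtx X Q)}
    (hσa : σa ∈ SA M D K0) {v : Vtx X Q} {T : CompatEnv M} {k : ℕ}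
    (hk : (outT M D K0 σa T)[k]? = some v)
    (hnv : nv M D K0 σa v < (outT M D K0 σa T).length) (hag : IsAgV v) :
    act M D K0 σa v = some ((outT M D K0 σa T)[nv M D K0 σa v]'hnv) := by
  obtain ⟨h1, -, hidx, hact⟩ := nv_spec M D K0 hinit hσa hk
  obtain ⟨m', hm'⟩ : ∃ m', nv M D K0 σa v = m' + 1 := ⟨nv M D K0 σa v - 1, by omega⟩
  rw [show nv M D K0 σa v - 1 = m' by omega] at hidx
  have hvm : (outT M D K0 σa T)[m']'(by omega) = v := by
    have e2 := List.getElem?_eq_getElem (l := outT M D K0 σa T) (i := m') (by omega)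
    rw [hidx] at e2
    exact (Option.some_injective _ e2).symm
  have hcl := ((outT_spec M D K0 hσa T).2.1 m' (by omega)).1 (by rw [hvm]; exact hag)
  rw [hact]
  have e1 : List.take (nv M D K0 σa v) (outT M D K0 σa T) =
      List.take (m' + 1) (outT M D K0 σa T) := by rw [hm']
  have e2 : (outT M D K0 σa T)[nv M D K0 σa v]'hnv =
      (outT M D K0 σa T)[m' + 1]'(by omega) := getElem_idx_congr hm' hnv
  rw [e1, e2]
  exact hcl

set_option linter.unusedSectionVars false in
lemma sim (hinit : IsInitK M K0) {σa : List (Vtx X Q) → Option (Vtx X Q)}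
    (hσa : σa ∈ SA M D K0) (T : CompatEnv M) :
    ∀ n k (hk : k < (outT M D K0 σa T).length),
      (outT M D K0 σa T).length - k ≤ n →
      IsAgV ((outT M D K0 σa T)[k]'hk) →
      ∃ π' : List (Vtx X Q),
        π'.head? = some ((outT M D K0 σa T)[k]'hk) ∧
        π'.Chain' (Edge M D) ∧
        (∀ i (h : i + 1 < π'.length),
          (IsAgV (π'[i]'(Nat.lt_of_succ_lt h)) →
            act M D K0 σa (π'[i]'(Nat.lt_of_succ_lt h)) = some (π'[i+1]'h)) ∧
          (IsEnvV (π'[i]'(Nat.lt_of_succ_lt h)) →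
            envOf M D T (π'[i]'(Nat.lt_of_succ_lt h)) = π'[i+1]'h)) ∧
        π'.getLast? = (outT M D K0 σa T).getLast? ∧
        costG M π' ≤ costG M ((outT M D K0 σa T).drop k) := by
  intro n
  induction n with
  | zero => intro k hk hkn; omega
  | succ n ih =>
    intro k hk hkn hag
    have hkk : (outT M D K0 σa T)[k]? = some ((outT M D K0 σa T)[k]'hk) :=
      List.getElem?_eq_getElem hk
    obtain ⟨h1, hnle, hnvk, -⟩ := nv_spec M D K0 hinit hσa hkk
    by_cases hm : nv M D K0 σa ((outT M D K0 σa T)[k]'hk) = (outT M D K0 σa T).length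
    · -- the current vertex is the final vertex of the outcome play : stop here
      refine ⟨[(outT M D K0 σa T)[k]'hk], by simp, by exact List.isChain_singleton _, by intro i h; simp at h, ?_, ?_⟩
      · have hlst : (outT M D K0 σa T).getLast? =
            some ((outT M D K0 σa T)[(outT M D K0 σa T).length - 1]'(by omega)) :=
          getLast?_of_getElem_last (by omega)
        rw [hlst]
        rw [hm] at hnvk
        have e2 := List.getElem?_eq_getElem
          (l := outT M D K0 σa T) (i := (outT M D K0 σa T).length - 1) (by omega)
        rw [hnvk] at e2
        simp [(Option.some_injective _ e2).symm]
      · have : costG M [(outT M D K0 σa T)[k]'hk] = 0 := by simp [costG]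
        rw [this]
        exact costG_nonneg M _
    · have hn1lt : nv M D K0 σa ((outT M D K0 σa T)[k]'hk) < (outT M D K0 σa T).length := by
        omega
      have hacts := act_some M D K0 hinit hσa hkk hn1lt hag
      obtain ⟨m', hm'⟩ : ∃ m', nv M D K0 σa ((outT M D K0 σa T)[k]'hk) = m' + 1 :=
        ⟨nv M D K0 σa ((outT M D K0 σa T)[k]'hk) - 1, by omega⟩
      have egE : (outT M D K0 σa T)[nv M D K0 σa ((outT M D K0 σa T)[k]'hk)]'hn1lt =
          (outT M D K0 σa T)[m' + 1]'(hm' ▸ hn1lt) := getElem_idx_congr hm' hn1lt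
      rw [egE] at hacts
      have hm1lt : m' + 1 < (outT M D K0 σa T).length := hm' ▸ hn1lt
      rw [show nv M D K0 σa ((outT M D K0 σa T)[k]'hk) - 1 = m' by omega] at hnvk
      have hvm : (outT M D K0 σa T)[m']'(by omega) = (outT M D K0 σa T)[k]'hk := by
        have e2 := List.getElem?_eq_getElem (l := outT M D K0 σa T) (i := m') (by omega)
        rw [hnvk] at e2
        exact (Option.some_injective _ e2).symm
      have hchain : (outT M D K0 σa T).Chain' (Edge M D) := (outT_spec M D K0 hσa T).1.2
      have hedge1 : Edge M D ((outT M D K0 σa T)[k]'hk) ((outT M D K0 σa T)[m'+1]'hm1lt) := by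
        have := chain'_getElem hchain (i := m') hm1lt
        rwa [hvm] at this
      have henvv : IsEnvV ((outT M D K0 σa T)[m'+1]'hm1lt) := (edge_ag_env M D hedge1).1 hag
      have hn11 : m' + 2 < (outT M D K0 σa T).length := by
        rcases Nat.lt_or_ge (m'+2) (outT M D K0 σa T).length with h | h
        · exact h
        · exfalso
          have hlast : (outT M D K0 σa T).getLast! =
              (outT M D K0 σa T)[(outT M D K0 σa T).length - 1]'(by omega) :=
            List.getLast!_of_getLast? (getLast?_of_getElem_last (by omega))
          have hagl := (outT_spec M D K0 hσa T).2.2.1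
          rw [hlast] at hagl
          apply not_ag_env hagl
          have e3 : (outT M D K0 σa T)[(outT M D K0 σa T).length - 1]'(by omega) =
              (outT M D K0 σa T)[m'+1]'hm1lt := getElem_idx_congr (by omega) (by omega)
          rw [e3]
          exact henvv
      have henvstep : envOf M D T ((outT M D K0 σa T)[m'+1]'hm1lt) =
          (outT M D K0 σa T)[m'+2]'hn11 :=
        ((outT_spec M D K0 hσa T).2.1 (m'+1) hn11).2 henvv
      have hedge2 : Edge M D ((outT M D K0 σa T)[m'+1]'hm1lt)
          ((outT M D K0 σa T)[m'+2]'hn11) := chain'_getElem hchain hn11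
      have hag1 : IsAgV ((outT M D K0 σa T)[m'+2]'hn11) := (edge_ag_env M D hedge2).2 henvv
      obtain ⟨π'', hh, hc, hcl, hlast, hcost⟩ := ih (m'+2) hn11 (by omega) hag1
      cases π'' with
      | nil => simp at hh
      | cons hd tl =>
        have hhd : hd = (outT M D K0 σa T)[m'+2]'hn11 := by simpa using hh
        refine ⟨(outT M D K0 σa T)[k]'hk :: (outT M D K0 σa T)[m'+1]'hm1lt :: hd :: tl,
          by simp, ?_, ?_, ?_, ?_⟩
        · exact List.isChain_cons_cons.2 ⟨hedge1, List.isChain_cons_cons.2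
            ⟨by rw [hhd]; exact hedge2, hc⟩⟩
        · intro i h
          match i with
          | 0 =>
            refine ⟨fun _ => ?_, fun henv => (not_ag_env hag henv).elim⟩
            simpa using hacts
          | 1 =>
            refine ⟨fun hagf => (not_ag_env hagf henvv).elim, fun _ => ?_⟩
            simp only [List.getElem_cons_succ, List.getElem_cons_zero]
            rw [henvstep, hhd]
          | (j+2) =>
            have h' : j + 1 < (hd :: tl).length := by
              simp at h ⊢; omega
            have := hcl j h'
            simpa using this
        · have e4 : ((outT M D K0 σa T)[k]'hk :: (outT M D K0 σa T)[m'+1]'hm1lt ::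
              hd :: tl).getLast? = (hd :: tl).getLast? := by
            simp [List.getLast?_cons_cons]
          rw [e4, hlast]
        · have hc1 : costG M ((outT M D K0 σa T)[k]'hk :: (outT M D K0 σa T)[m'+1]'hm1lt ::
              hd :: tl) =
              wG M ((outT M D K0 σa T)[k]'hk) ((outT M D K0 σa T)[m'+1]'hm1lt) +
                (wG M ((outT M D K0 σa T)[m'+1]'hm1lt) hd + costG M (hd :: tl)) := by
            rw [costG_cons_cons, costG_cons_cons]
          have hwv : wG M ((outT M D K0 σa T)[k]'hk) ((outT M D K0 σa T)[m'+1]'hm1lt) = 0 := by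
            obtain ⟨x, q, K, hv⟩ := ag_shape hag
            obtain ⟨xe, qe, Ke, xh, he⟩ := env_shape henvv
            rw [hv, he]
            rfl
          have hstep1 : costG M ((outT M D K0 σa T).drop (m'+1)) =
              wG M ((outT M D K0 σa T)[m'+1]'hm1lt) ((outT M D K0 σa T)[m'+2]'hn11) +
                costG M ((outT M D K0 σa T).drop (m'+2)) := costG_drop_succ M hn11
          have hmono : costG M ((outT M D K0 σa T).drop (m'+1)) ≤
              costG M ((outT M D K0 σa T).drop k) := costG_drop_mono M _ (by omega)
          rw [hc1, hwv]
          rw [hhd] at hcost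
          rw [hhd]
          linarith

set_option linter.unusedSectionVars false in
lemma posOf_outcome (hinit : IsInitK M K0) {σa : List (Vtx X Q) → Option (Vtx X Q)}
    (hσa : σa ∈ SA M D K0) (T : CompatEnv M) :
    ∃ π', IsOutcome M D K0 (posOf M D K0 σa) (envOf M D T) π' ∧
      π'.getLast! = (outT M D K0 σa T).getLast! ∧
      costG M π' ≤ costG M (outT M D K0 σa T) := by
  have hpos : 0 < (outT M D K0 σa T).length := outT_pos M D K0 hσa T
  have hv0 : (outT M D K0 σa T)[0]'hpos = v0 M D K0 :=
    head?_getElem (outT_spec M D K0 hσa T).1.1 hpos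
  have hag0 : IsAgV ((outT M D K0 σa T)[0]'hpos) := by
    rw [hv0]; trivial
  obtain ⟨π', hh, hchain, hcl, hlast, hcost⟩ :=
    sim M D K0 hinit hσa T (outT M D K0 σa T).length 0 hpos (by omega) hag0
  have hne : 0 < π'.length := head?_length_pos hh
  have hlastl : (outT M D K0 σa T).getLast? =
      some ((outT M D K0 σa T)[(outT M D K0 σa T).length - 1]'(by omega)) :=
    getLast?_of_getElem_last hpos
  have hlast' : π'.getLast? =
      some ((outT M D K0 σa T)[(outT M D K0 σa T).length - 1]'(by omega)) := by
    rw [hlast]; exact hlastl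
  have hlast!π : π'.getLast! =
      (outT M D K0 σa T)[(outT M D K0 σa T).length - 1]'(by omega) :=
    List.getLast!_of_getLast? hlast'
  have hlast!l : (outT M D K0 σa T).getLast! =
      (outT M D K0 σa T)[(outT M D K0 σa T).length - 1]'(by omega) :=
    List.getLast!_of_getLast? hlastl
  have hlk : (outT M D K0 σa T)[(outT M D K0 σa T).length - 1]? =
      some ((outT M D K0 σa T)[(outT M D K0 σa T).length - 1]'(by omega)) :=
    List.getElem?_eq_getElem (by omega)
  have hnvlast : nv M D K0 σa ((outT M D K0 σa T)[(outT M D K0 σa T).length - 1]'(by omega)) =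
      (outT M D K0 σa T).length := by
    obtain ⟨ha, hb, -, -⟩ := nv_spec M D K0 hinit hσa hlk
    omega
  refine ⟨π', ⟨⟨by rw [hh, hv0], hchain⟩, ?_, ?_, ?_⟩, ?_, ?_⟩
  · intro i h
    refine ⟨fun hagi => ?_, (hcl i h).2⟩
    have hp : posOf M D K0 σa (π'.take (i+1)) = act M D K0 σa (π'[i]'(by omega)) := by
      unfold posOf
      rw [getLast?_take_succ (by omega : i < π'.length)]
    rw [hp]
    exact (hcl i h).1 hagi
  · rw [hlast!π]
    have := (outT_spec M D K0 hσa T).2.2.1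
    rwa [hlast!l] at this
  · show posOf M D K0 σa π' = none
    unfold posOf
    rw [hlast']
    exact act_none M D K0 hinit hσa hlk hnvlast
  · rw [hlast!π, hlast!l]
  · have : (outT M D K0 σa T).drop 0 = outT M D K0 σa T := List.drop_zero
    rwa [this] at hcost

set_option linter.unusedSectionVars false in
lemma posOf_SA (hinit : IsInitK M K0) {σa : List (Vtx X Q) → Option (Vtx X Q)}
    (hσa : σa ∈ SA M D K0) :
    posOf M D K0 σa ∈ SA M D K0 ∧
      ∀ T : CompatEnv M,
        costG M (outcome M D K0 (posOf M D K0 σa) (envOf M D T)) ≤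
          costG M (outcome M D K0 σa (envOf M D T)) := by
  have hAV : AValid M D K0 (posOf M D K0 σa) := by
    intro π u v hplay hlastu hagu hsome
    rw [show posOf M D K0 σa π = act M D K0 σa u by unfold posOf; rw [hlastu]] at hsome
    unfold act at hsome
    split at hsome
    case isFalse => exact nomatch hsome
    case isTrue hex =>
      have hc := hex.choose_spec
      generalize hgen : hex.choose = Tc at hc hsome
      obtain ⟨ha, hb, -, -⟩ := nv_spec M D K0 hinit hσa hc
      have hge1 : 1 ≤ nv M D K0 σa u := by omega
      by_cases hnv : nv M D K0 σa u = (outT M D K0 σa Tc).length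
      · exfalso
        rw [hnv, List.take_length] at hsome
        rw [(outT_spec M D K0 hσa Tc).2.2.2] at hsome
        exact nomatch hsome
      · obtain ⟨m', hm'⟩ : ∃ m', nv M D K0 σa u = m' + 1 := ⟨nv M D K0 σa u - 1, by omega⟩
        have hm1lt : m' + 1 < (outT M D K0 σa Tc).length := by omega
        rw [show nv M D K0 σa u - 1 = m' by omega] at hc
        have hvm : (outT M D K0 σa Tc)[m']'(by omega) = u := by
          have e2 := List.getElem?_eq_getElem (l := outT M D K0 σa Tc) (i := m') (by omega)
          rw [hc] at e2
          exact (Option.some_injective _ e2).symm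
        have hclm := ((outT_spec M D K0 hσa Tc).2.1 m' hm1lt).1 (by rw [hvm]; exact hagu)
        rw [show List.take (nv M D K0 σa u) (outT M D K0 σa Tc) =
            List.take (m' + 1) (outT M D K0 σa Tc) by rw [hm']] at hsome
        rw [hclm] at hsome
        have hv : v = (outT M D K0 σa Tc)[m'+1]'hm1lt :=
          (Option.some_injective _ hsome).symm
        rw [hv, ← hvm]
        exact chain'_getElem (outT_spec M D K0 hσa Tc).1.2 hm1lt
  constructor
  · refine ⟨hAV, ?_⟩
    intro σe hσe
    obtain ⟨π', hout', hlast!, -⟩ := posOf_outcome M D K0 hinit hσa (envTof M D hσe)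
    refine ⟨π', ?_, ?_⟩
    · exact (isOutcome_iff_envAgree M D K0 (envTof_agrees M D hσe) π').2 hout'
    · rw [hlast!]
      exact outT_lastVF M D K0 hσa (envTof M D hσe)
  · intro T
    obtain ⟨π', hout', -, hcost⟩ := posOf_outcome M D K0 hinit hσa T
    rw [show outcome M D K0 (posOf M D K0 σa) (envOf M D T) = π' from
      isOutcome_unique M D K0 (outcome_spec M D K0 ⟨π', hout'⟩) hout']
    exact hcost

/-! ### Finiteness of the regret values of positional strategies -/

set_option linter.unusedSectionVars false in
lemma play_alternation {π : List (Vtx X Q)} (hplay : IsPlay M D K0 π) :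
    ∀ i (hi : i < π.length),
      (i % 2 = 0 → IsAgV (π[i]'hi)) ∧ (i % 2 = 1 → IsEnvV (π[i]'hi)) := by
  intro i
  induction i with
  | zero =>
    intro hi
    refine ⟨fun _ => ?_, fun h => by omega⟩
    rw [head?_getElem hplay.1 hi]
    trivial
  | succ nn ih =>
    intro hi
    have hedge := chain'_getElem hplay.2 hi
    have hn := ih (by omega)
    constructor
    · intro hpar
      exact (edge_ag_env M D hedge).2 (hn.2 (by omega))
    · intro hpar
      exact (edge_ag_env M D hedge).1 (hn.1 (by omega))

set_option linter.unusedSectionVars false in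
lemma kof_nodup (hinit : IsInitK M K0) {π : List (Vtx X Q)} (hplay : IsPlay M D K0 π) :
    ∀ i (hi : i < π.length), ((Kof (π[i]'hi)).map Prod.fst).Nodup := by
  intro i
  induction i with
  | zero =>
    intro hi
    rw [head?_getElem hplay.1 hi]
    exact hinit.1
  | succ nn ih =>
    intro hi
    have hedge := chain'_getElem hplay.2 hi
    have hn := ih (by omega)
    cases hu : π[nn]'(by omega) with
    | ag x q K =>
      cases hv : π[nn+1]'hi with
      | ag x' q' K' => rw [hu, hv] at hedge; simp [Edge] at hedge
      | env x' q' K' xh =>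
        rw [hu, hv] at hedge
        obtain ⟨-, -, rfl, -⟩ := hedge
        rw [hu] at hn
        exact hn
    | env xe qe Ke xh =>
      cases hv : π[nn+1]'hi with
      | env x' q' K' xh' => rw [hu, hv] at hedge; simp [Edge] at hedge
      | ag xa qa Ka =>
        rw [hu, hv] at hedge
        obtain ⟨-, -, o, -, rfl⟩ := hedge
        rw [hu] at hn
        exact kupdate_nodup hn

set_option linter.unusedSectionVars false in
lemma positional_outcome_nodup {σp : List (Vtx X Q) → Option (Vtx X Q)}
    {σe : Vtx X Q → Vtx X Q} {π : List (Vtx X Q)} (hpos : PositionalA σp)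
    (hout : IsOutcome M D K0 σp σe π) :
    ∀ i j (hi : i < π.length) (hj : j < π.length), i < j →
      π[i]'hi = π[j]'hj → False := by
  intro i j hi hj hij heqv
  have hprop : ∀ t (ht : j + t ≤ π.length - 1),
      π[i+t]'(by omega) = π[j+t]'(by omega) := by
    intro t
    induction t with
    | zero => intro _; simpa using heqv
    | succ s ihs =>
      intro ht
      have hs := ihs (by omega)
      have h1 : i + s + 1 < π.length := by omega
      have h2 : j + s + 1 < π.length := by omega
      have gi : π[i+(s+1)]'(by omega) = π[i+s+1]'h1 := getElem_idx_congr (by omega) (by omega)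
      have gj : π[j+(s+1)]'(by omega) = π[j+s+1]'h2 := getElem_idx_congr (by omega) (by omega)
      rw [gi, gj]
      rcases vtx_ag_or_env (π[i+s]'(by omega)) with hagi | henvi
      · have e1 := (hout.2.1 (i+s) h1).1 hagi
        have e2 := (hout.2.1 (j+s) h2).1 (hs ▸ hagi)
        have htake : σp (π.take (i+s+1)) = σp (π.take (j+s+1)) := by
          apply hpos
          rw [getLast?_take_succ (by omega : i+s < π.length),
              getLast?_take_succ (by omega : j+s < π.length), hs]
        rw [htake, e2] at e1
        exact (Option.some_injective _ e1).symm
      · have e1 := (hout.2.1 (i+s) h1).2 henvi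
        have e2 := (hout.2.1 (j+s) h2).2 (hs ▸ henvi)
        rw [hs] at e1
        rw [← e1, ← e2]
  have hfin := hprop (π.length - 1 - j) (by omega)
  have hidxlast : π[j + (π.length - 1 - j)]'(by omega) = π[π.length - 1]'(by omega) :=
    getElem_idx_congr (by omega) (by omega)
  have hlasteq : π.getLast? = some (π[π.length-1]'(by omega)) :=
    getLast?_of_getElem_last (by omega)
  have hlast! : π.getLast! = π[π.length-1]'(by omega) := List.getLast!_of_getLast? hlasteq
  have hagidx : IsAgV (π[i + (π.length-1-j)]'(by omega)) := by
    rw [hfin, hidxlast, ← hlast!]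
    exact hout.2.2.1
  have hcl := (hout.2.1 (i + (π.length-1-j)) (by omega)).1 hagidx
  have hsp : σp (π.take (i + (π.length-1-j) + 1)) = σp π := by
    apply hpos
    rw [getLast?_take_succ (by omega : i + (π.length-1-j) < π.length), hfin, hidxlast,
        hlasteq]
  rw [hsp, hout.2.2.2] at hcl
  exact nomatch hcl

/-- Encoding of knowledge-sets of length at most `card X` into a fintype. -/
noncomputable def encK (K : List (X × Finset X)) :
    Fin (Fintype.card X + 1) × (Fin (Fintype.card X) → X × Finset X) :=
  (⟨min K.length (Fintype.card X), by omega⟩, fun i => K.getD i (default, ∅))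

set_option linter.unusedSectionVars false in
lemma encK_inj {K1 K2 : List (X × Finset X)} (h1 : K1.length ≤ Fintype.card X)
    (h2 : K2.length ≤ Fintype.card X) (he : encK K1 = encK K2) : K1 = K2 := by
  have hlen : K1.length = K2.length := by
    have := congrArg (fun p => (p.1 : ℕ)) he
    simp only [encK] at this
    omega
  apply List.ext_getElem hlen
  intro i hi1 hi2
  have hsnd := congrFun (congrArg Prod.snd he) ⟨i, by omega⟩
  simp only [encK] at hsnd
  rwa [List.getD_eq_getElem?_getD, List.getD_eq_getElem?_getD,
      List.getElem?_eq_getElem hi1, List.getElem?_eq_getElem hi2] at hsnd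

/-- Encoding of reachable vertices (agent vertices in particular). -/
noncomputable def encV : Vtx X Q →
    X × Q × (Fin (Fintype.card X + 1) × (Fin (Fintype.card X) → X × Finset X))
  | .ag x q K => (x, q, encK K)
  | .env x q K _ => (x, q, encK K)

/-- Bound on the number of possible agent vertices. -/
noncomputable def NBv : ℕ :=
  Fintype.card (X × Q × (Fin (Fintype.card X + 1) × (Fin (Fintype.card X) → X × Finset X)))

set_option linter.unusedSectionVars false in
lemma length_bound (hinit : IsInitK M K0) {σp : List (Vtx X Q) → Option (Vtx X Q)}
    {σe : Vtx X Q → Vtx X Q} {π : List (Vtx X Q)} (hpos : PositionalA σp)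
    (hout : IsOutcome M D K0 σp σe π) : π.length ≤ 2 * NBv (X := X) (Q := Q) := by
  have hpl : IsPlay M D K0 π := hout.1
  have hpos0 : 0 < π.length := head?_length_pos hpl.1
  have halt := play_alternation M D K0 hpl
  have hlastag : IsAgV (π[π.length-1]'(by omega)) := by
    rw [← List.getLast!_of_getLast? (getLast?_of_getElem_last hpos0)]
    exact hout.2.2.1
  have hpar : (π.length - 1) % 2 = 0 := by
    by_contra hodd
    exact not_ag_env hlastag ((halt (π.length - 1) (by omega)).2 (by omega))
  obtain ⟨m, hm⟩ : ∃ m, π.length = 2*m+1 := ⟨(π.length-1)/2, by omega⟩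
  have h2i : ∀ iv : Fin (m+1), 2*(iv:ℕ) < π.length := by intro iv; have := iv.2; omega
  have hinj : Function.Injective (fun iv : Fin (m+1) => encV (π[2*(iv:ℕ)]'(h2i iv))) := by
    intro iv jv hij
    by_contra hne
    have hagv : ∀ kv : Fin (m+1), IsAgV (π[2*(kv:ℕ)]'(h2i kv)) := fun kv =>
      (halt _ (h2i kv)).1 (by omega)
    have hij' : encV (Q := Q) (π[2*(iv:ℕ)]'(h2i iv)) = encV (π[2*(jv:ℕ)]'(h2i jv)) := hij
    have hveq : π[2*(iv:ℕ)]'(h2i iv) = π[2*(jv:ℕ)]'(h2i jv) := by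
      obtain ⟨xi, qi, Ki, hsi⟩ := ag_shape (hagv iv)
      obtain ⟨xj, qj, Kj, hsj⟩ := ag_shape (hagv jv)
      rw [hsi, hsj] at hij' ⊢
      simp only [encV, Prod.mk.injEq] at hij'
      obtain ⟨rfl, rfl, hK⟩ := hij'
      have hKi : Ki.length ≤ Fintype.card X := by
        have := kof_nodup M D K0 hinit hpl (2*(iv:ℕ)) (h2i iv)
        rw [hsi] at this
        have hlc := this.length_le_card
        simpa [Kof] using hlc
      have hKj : Kj.length ≤ Fintype.card X := by
        have := kof_nodup M D K0 hinit hpl (2*(jv:ℕ)) (h2i jv)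
        rw [hsj] at this
        have hlc := this.length_le_card
        simpa [Kof] using hlc
      rw [encK_inj hKi hKj hK]
    rcases lt_trichotomy iv jv with h | h | h
    · exact positional_outcome_nodup M D K0 hpos hout _ _ (h2i iv) (h2i jv)
        (by have : (iv:ℕ) < (jv:ℕ) := h; omega) hveq
    · exact hne h
    · exact positional_outcome_nodup M D K0 hpos hout _ _ (h2i jv) (h2i iv)
        (by have : (jv:ℕ) < (iv:ℕ) := h; omega) hveq.symm
  have hcard := Fintype.card_le_of_injective _ hinj
  simp only [Fintype.card_fin] at hcard
  have : m + 1 ≤ NBv (X := X) (Q := Q) := hcard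
  omega

open Classical in
/-- The finite set of possible single-step weights. -/
noncomputable def W0 : Finset ℝ :=
  insert 0 ((Finset.univ : Finset (X × X)).image fun p => M.w p.1 p.2)

open Classical in
/-- Finite sets of possible `n`-step costs. -/
noncomputable def SumsN : ℕ → Finset ℝ
  | 0 => {0}
  | (n+1) => (W0 M ×ˢ (SumsN n)).image fun p => p.1 + p.2

set_option linter.unusedSectionVars false in
lemma sum_mem_SumsN (f : ℕ → ℝ) :
    ∀ n, (∀ i, i < n → f i ∈ W0 M) →
      (∑ i ∈ Finset.range n, f i) ∈ SumsN M n := by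
  intro n
  induction n with
  | zero => intro _; simp [SumsN]
  | succ n ih =>
    intro hf
    rw [Finset.sum_range_succ]
    show _ ∈ SumsN M (n+1)
    unfold SumsN
    rw [Finset.mem_image]
    refine ⟨(f n, ∑ i ∈ Finset.range n, f i), ?_, by ring⟩
    rw [Finset.mem_product]
    exact ⟨hf n (by omega), ih (fun i hi => hf i (by omega))⟩

set_option linter.unusedSectionVars false in
lemma costG_mem_SumsN (l : List (Vtx X Q)) {LB : ℕ} (hlen : l.length ≤ LB + 1) :
    costG M l ∈ SumsN M LB := by
  rw [costG_eq_sum M l LB hlen]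
  apply sum_mem_SumsN
  intro i _
  cases h1 : l[i]? with
  | none => simp [W0]
  | some a =>
    cases h2 : l[i+1]? with
    | none => simp [W0]
    | some b =>
      show wG M a b ∈ W0 M
      cases a with
      | ag x q K => cases b <;> simp [wG, W0]
      | env xe qe Ke xh =>
        cases b with
        | ag xa qa Ka =>
          show M.w xe xa ∈ W0 M
          unfold W0
          apply Finset.mem_insert_of_mem
          exact Finset.mem_image.2 ⟨(xe, xa), Finset.mem_univ _, rfl⟩
        | env a b c d => simp [wG, W0]

open Classical in
/-- Finite set containing all regret values of positional winning strategies. -/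
noncomputable def RegFin : Set ℝ :=
  ⋃ T : CompatEnv M,
    (fun c => c - bestCost M D K0 (envOf M D T)) ''
      ((SumsN M (2 * NBv (X := X) (Q := Q)) : Finset ℝ) : Set ℝ)

set_option linter.unusedSectionVars false in
lemma RegFin_finite : (RegFin M D K0).Finite :=
  Set.finite_iUnion fun T => (Finset.finite_toSet _).image _

set_option linter.unusedSectionVars false in
lemma regG_positional_mem (hinit : IsInitK M K0)
    {σp : List (Vtx X Q) → Option (Vtx X Q)} (hσp : σp ∈ SA M D K0)
    (hpos : PositionalA σp) : regG M D K0 σp ∈ RegFin M D K0 := by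
  rw [regG_eq_sSup_range]
  have hmem : sSup (Set.range fun T : CompatEnv M => regAgainst M D K0 σp (envOf M D T)) ∈
      Set.range fun T : CompatEnv M => regAgainst M D K0 σp (envOf M D T) :=
    (Set.range_nonempty _).csSup_mem (Set.finite_range _)
  obtain ⟨T, hT⟩ := hmem
  rw [← hT]
  apply Set.mem_iUnion.2
  refine ⟨T, ?_⟩
  refine ⟨costG M (outcome M D K0 σp (envOf M D T)), ?_, rfl⟩
  have hout := outcome_spec M D K0
    (let h := hσp.2 (envOf M D T) (envOf_SE M D T); ⟨h.choose, h.choose_spec.1⟩)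
  have hlb := length_bound M D K0 hinit hpos hout
  simpa using costG_mem_SumsN M (outcome M D K0 σp (envOf M D T)) (by omega)



/-- positional strategies suffice to minimize the regret of the
agent-player in the knowledge-based game arena. -/
theorem positional_suffices_for_min_regret
    (hinit : IsInitK M K0)
    (hSA : (SA M D K0).Nonempty) :
    ∃ σa ∈ SA M D K0, PositionalA σa ∧
      ∀ σa' ∈ SA M D K0, regG M D K0 σa ≤ regG M D K0 σa' := by
  classical
  obtain ⟨σa0, hσa0⟩ := hSA
  obtain ⟨hpos0SA, -⟩ := posOf_SA M D K0 hinit hσa0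
  -- the set of regret values of positional winning strategies
  set VS : Set ℝ :=
    {r | ∃ σp, σp ∈ SA M D K0 ∧ PositionalA σp ∧ regG M D K0 σp = r} with hVS
  have hVSsub : VS ⊆ RegFin M D K0 := by
    rintro r ⟨σp, hσp, hp, rfl⟩
    exact regG_positional_mem M D K0 hinit hσp hp
  have hVSfin : VS.Finite := (RegFin_finite M D K0).subset hVSsub
  have hVSne : VS.Nonempty :=
    ⟨regG M D K0 (posOf M D K0 σa0), posOf M D K0 σa0, hpos0SA,
      posOf_positional M D K0 σa0, rfl⟩
  obtain ⟨σps, hσps, hposps, heq⟩ := hVSne.csInf_mem hVSfin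
  refine ⟨σps, hσps, hposps, ?_⟩
  intro σa' hσa'
  obtain ⟨hq, hcostq⟩ := posOf_SA M D K0 hinit hσa'
  have h1 : regG M D K0 σps ≤ regG M D K0 (posOf M D K0 σa') := by
    rw [heq]
    exact csInf_le hVSfin.bddBelow
      ⟨posOf M D K0 σa', hq, posOf_positional M D K0 σa', rfl⟩
  exact le_trans h1 (regG_mono M D K0 hcostq)

end RegretLTL
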